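/- arXiv:2305.03626 — 2 statements merged into one kernel-verified Lean document; each statement's English description precedes it below -/
import Mathlib

section
/- Let T be a tree ensemble with ψ_p(T) > 2k, let t and t' be two distinct trees of T, let x ∈ ℝ^d be an instance with label y, and let z ∈ A_{p,k}(x) be such that t(z) ≠ y and t'(z) ≠ y. Then there exist vectors δ, δ' ∈ ℝ^d such that: (1) z = x + δ + δ' and supp(δ) ∩ supp(δ') = ∅; (2) t(x + δ) ≠ y; (3) t'(x + δ') ≠ y. -/
open scoped Classical

/-- The kinds of norms considered: `L0` (number of nonzero components),
`Lp` for an integer `p ≥ 1` (represented by a positive natural), and `L∞`. -/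
inductive PNorm : Type where
  | L0 : PNorm
  | Lp : ℕ+ → PNorm
  | Linf : PNorm

/-- The `p`-norm of a vector `δ ∈ ℝ^d`: for `L0`, the number of nonzero components;
for `Lp` with integer `p ≥ 1`, `(∑ i, |δ i| ^ p) ^ (1/p)`; for `L∞`, `max_i |δ i|`. -/
noncomputable def pnorm {d : ℕ} (p : PNorm) (δ : Fin d → ℝ) : ℝ :=
  match p with
  | .L0 => ((Finset.univ.filter fun i => δ i ≠ 0).card : ℝ)
  | .Lp n => (∑ i, |δ i| ^ (n : ℕ)) ^ (((n : ℕ) : ℝ)⁻¹)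
  | .Linf => ⨆ i, |δ i|

/-- The corresponding norm on scalars: for `L0`, `0` if the scalar is `0` and `1`
otherwise; for `Lp` and `L∞`, the absolute value. -/
noncomputable def scalarNorm (p : PNorm) (a : ℝ) : ℝ :=
  match p with
  | .L0 => if a = 0 then 0 else 1
  | _ => |a|

/-- A binary decision tree over `ℝ^d` with labels in `{+1, -1}` (encoded as `Bool`,
`true` for `+1` and `false` for `-1`). -/
inductive DTree (d : ℕ) : Type where
  | leaf (y : Bool) : DTree d
  | node (f : Fin d) (v : ℝ) (tl tr : DTree d) : DTree d

/-- The prediction of a decision tree on `x ∈ ℝ^d`: at `σ(f, v, tl, tr)` descend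
into `tl` if `x f ≤ v` and into `tr` otherwise; at a leaf, return its label. -/
noncomputable def DTree.pred {d : ℕ} : DTree d → (Fin d → ℝ) → Bool
  | .leaf y, _ => y
  | .node f v tl tr, x => if x f ≤ v then tl.pred x else tr.pred x

/-- `t.hasNode f v` holds iff `t` contains an internal node `σ(f, v)` testing
feature `f` with threshold `v`. -/
def DTree.hasNode {d : ℕ} : DTree d → Fin d → ℝ → Prop
  | .leaf _, _, _ => False
  | .node f v tl tr, f', v' => (f = f' ∧ v = v') ∨ tl.hasNode f' v' ∨ tr.hasNode f' v'

/-- The attacker `A_{p,k}` maps `x ∈ ℝ^d` to the set of its adversarial manipulations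
`A_{p,k}(x) = {z : ‖z − x‖_p ≤ k}`. -/
def attacker {d : ℕ} (p : PNorm) (k : ℝ) (x : Fin d → ℝ) : Set (Fin d → ℝ) :=
  {z | pnorm p (z - x) ≤ k}

/-- The large-spread condition `ψ_p(T) > 2k`: for every two internal nodes `σ(f, v)`
and `σ(f, v')` testing the same feature `f` in two distinct trees of `T`, the scalar
norm `‖v − v'‖_p` exceeds `2k`. -/
def LargeSpread {d : ℕ} (p : PNorm) (k : ℝ) (T : Finset (DTree d)) : Prop :=
  ∀ t ∈ T, ∀ t' ∈ T, t ≠ t' →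
    ∀ f v v', t.hasNode f v → t'.hasNode f v' → 2 * k < scalarNorm p (v - v')

/-- The support of `δ ∈ ℝ^d`: the set of coordinates where `δ` is nonzero. -/
def supp {d : ℕ} (δ : Fin d → ℝ) : Set (Fin d) := {i | δ i ≠ 0}

/-- `δ` is a minimal attack against the tree `t` on the instance `x` with label `y`
and budget `k`: `δ` has minimum `L_p` norm among all `δ'` with `‖δ'‖_p ≤ k` and
`t(x + δ') ≠ y`. -/
def MinimalAttack {d : ℕ} (p : PNorm) (k : ℝ) (t : DTree d) (x : Fin d → ℝ)
    (y : Bool) (δ : Fin d → ℝ) : Prop :=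
  pnorm p δ ≤ k ∧ t.pred (x + δ) ≠ y ∧
    ∀ δ' : Fin d → ℝ, pnorm p δ' ≤ k → t.pred (x + δ') ≠ y → pnorm p δ ≤ pnorm p δ'

lemma pred_congr {d : ℕ} (s : DTree d) (a b : Fin d → ℝ)
    (h : ∀ f v, s.hasNode f v → (a f ≤ v ↔ b f ≤ v)) : s.pred a = s.pred b := by
  induction s with
  | leaf y => rfl
  | node f v tl tr ihl ihr =>
    have hfv := h f v (Or.inl ⟨rfl, rfl⟩)
    simp only [DTree.pred]
    by_cases hav : a f ≤ v
    · rw [if_pos hav, if_pos (hfv.mp hav)]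
      exact ihl fun f' v' hn => h f' v' (Or.inr (Or.inl hn))
    · rw [if_neg hav, if_neg fun hb => hav (hfv.mpr hb)]
      exact ihr fun f' v' hn => h f' v' (Or.inr (Or.inr hn))

lemma flip_mem {a b v : ℝ} (h : ¬((a ≤ v) ↔ (b ≤ v))) :
    min a b ≤ v ∧ v ≤ max a b := by
  by_cases ha : a ≤ v
  · have hb : ¬ b ≤ v := fun hb => h ⟨fun _ => hb, fun _ => ha⟩
    exact ⟨(min_le_left a b).trans ha, (le_of_lt (not_le.mp hb)).trans (le_max_right a b)⟩
  · have hb : b ≤ v := by by_contra hb; exact h (iff_of_false ha hb)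
    exact ⟨(min_le_right a b).trans hb, (le_of_lt (not_le.mp ha)).trans (le_max_left a b)⟩

lemma scalar_flip (p : PNorm) {a b v v' : ℝ} (h : ¬((a ≤ v) ↔ (b ≤ v)))
    (h' : ¬((a ≤ v') ↔ (b ≤ v'))) : scalarNorm p (v - v') ≤ scalarNorm p (a - b) := by
  have hab : a - b ≠ 0 := by
    intro hc
    have : a = b := by linarith [sub_eq_zero.mp hc]
    subst this; exact h Iff.rfl
  have h1 := flip_mem h
  have h2 := flip_mem h'
  have hmm : max a b - min a b = |a - b| := by
    rw [max_sub_min_eq_abs, abs_sub_comm]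
  have habs : |v - v'| ≤ |a - b| := by
    rw [abs_sub_le_iff]
    constructor <;> linarith [h1.1, h1.2, h2.1, h2.2]
  match p with
  | .L0 =>
    simp only [scalarNorm, if_neg hab]
    split_ifs <;> norm_num
  | .Lp n => exact habs
  | .Linf => exact habs

lemma scalar_le_pnorm {d : ℕ} (p : PNorm) (δ : Fin d → ℝ) (i : Fin d) :
    scalarNorm p (δ i) ≤ pnorm p δ := by
  match p with
  | .L0 =>
    simp only [scalarNorm, pnorm]
    split_ifs with h
    · positivity
    · have hi : i ∈ Finset.univ.filter (fun j => δ j ≠ 0) := by simp [h]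
      exact_mod_cast Finset.card_pos.mpr ⟨i, hi⟩
  | .Lp n =>
    simp only [scalarNorm, pnorm]
    have hn : (((n : ℕ) : ℝ)) ≠ 0 := Nat.cast_ne_zero.mpr n.pos.ne'
    have h1 : |δ i| ^ (n : ℕ) ≤ ∑ j, |δ j| ^ (n : ℕ) :=
      Finset.single_le_sum (f := fun j => |δ j| ^ (n : ℕ)) (fun j _ => by positivity) (Finset.mem_univ i)
    calc |δ i| = (|δ i| ^ (n : ℕ)) ^ (((n : ℕ) : ℝ)⁻¹) := by
          rw [← Real.rpow_natCast (|δ i|), ← Real.rpow_mul (abs_nonneg _),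
            mul_inv_cancel₀ hn, Real.rpow_one]
      _ ≤ _ := Real.rpow_le_rpow (by positivity) h1 (by positivity)
  | .Linf =>
    show |δ i| ≤ ⨆ j, |δ j|
    exact le_ciSup (f := fun j => |δ j|) (Finite.bddAbove_range _) i

/-- Let `T` be a tree ensemble with `ψ_p(T) > 2k`, `t ≠ t'` two distinct trees of `T`,
`x` an instance with label `y`, and `z ∈ A_{p,k}(x)` such that `t z ≠ y` and
`t' z ≠ y`. Then there exist `δ, δ' ∈ ℝ^d` such that: (1) `z = x + δ + δ'` with
`supp δ ∩ supp δ' = ∅`; (2) `t (x + δ) ≠ y`; (3) `t' (x + δ') ≠ y`. -/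
theorem stmt8 {d : ℕ} (p : PNorm) (k : ℝ) (hk : 0 ≤ k)
    (T : Finset (DTree d)) (hT : LargeSpread p k T)
    (t t' : DTree d) (ht : t ∈ T) (ht' : t' ∈ T) (hne : t ≠ t')
    (x : Fin d → ℝ) (y : Bool) (z : Fin d → ℝ) (hz : z ∈ attacker p k x)
    (htz : t.pred z ≠ y) (ht'z : t'.pred z ≠ y) :
    ∃ δ δ' : Fin d → ℝ,
      (z = x + δ + δ' ∧ supp δ ∩ supp δ' = ∅) ∧
      t.pred (x + δ) ≠ y ∧
      t'.pred (x + δ') ≠ y := by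
  set flip : Fin d → Prop := fun f => ∃ v, t.hasNode f v ∧ ¬((z f ≤ v) ↔ (x f ≤ v)) with hflip
  refine ⟨fun f => if flip f then z f - x f else 0,
          fun f => if flip f then 0 else z f - x f, ⟨?_, ?_⟩, ?_, ?_⟩
  · funext i
    simp only [Pi.add_apply]
    by_cases h : flip i <;> simp [h]
  · rw [Set.eq_empty_iff_forall_notMem]
    rintro i ⟨h1, h2⟩
    by_cases h : flip i
    · exact h2 (by simp [supp, h])
    · exact h1 (by simp [supp, h])
  · rw [pred_congr t (x + fun f => if flip f then z f - x f else 0) z ?_]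
    · exact htz
    · intro f v hn
      by_cases hf : flip f
      · simp only [Pi.add_apply, if_pos hf]
        constructor <;> intro <;> linarith
      · have hiff : z f ≤ v ↔ x f ≤ v := by
          by_contra hc; exact hf ⟨v, hn, hc⟩
        simp only [Pi.add_apply, if_neg hf, add_zero]
        exact hiff.symm
  · rw [pred_congr t' (x + fun f => if flip f then 0 else z f - x f) z ?_]
    · exact ht'z
    · intro f v' hn'
      by_cases hf : flip f
      · obtain ⟨v, hnv, hflipv⟩ := id hf
        have hiff : x f ≤ v' ↔ z f ≤ v' := by
          by_contra hc
          have hc' : ¬((z f ≤ v') ↔ (x f ≤ v')) := fun hi => hc hi.symm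
          have hsf := scalar_flip p hflipv hc'
          have hsp := hT t ht t' ht' hne f v v' hnv hn'
          have hle : scalarNorm p (z f - x f) ≤ pnorm p (z - x) := by
            have := scalar_le_pnorm p (z - x) f
            simpa using this
          have hzk : pnorm p (z - x) ≤ k := hz
          linarith
        simp only [Pi.add_apply, if_pos hf, add_zero]
        exact hiff
      · simp only [Pi.add_apply, if_neg hf]
        constructor <;> intro <;> linarith
end

section
/- Let T = {t_1, …, t_m} be a tree ensemble with m odd and ψ_p(T) > 2k, and let x ∈ ℝ^d be an instance with label y = T(x). For each tree t ∈ T that admits some attack within budget k (i.e., some δ with ‖δ‖_p ≤ k and t(x + δ) ≠ y), let Δ_t denote the minimum L_p norm of such an attack. Suppose there is NO subset S ⊆ T with |S| = (m−1)/2 + 1 such that every tree in S admits an attack within budget k and ⊕_{t ∈ S} Δ_t ≤ k. Then T is stable on x for the attacker A_{p,k}. -/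
open scoped Classical

/-- A classifier `g` is stable on `x` for the attacker `A` iff `g z = g x` for
all `z ∈ A x`. -/
def Stable {d : ℕ} (g : (Fin d → ℝ) → Bool) (A : (Fin d → ℝ) → Set (Fin d → ℝ))
    (x : Fin d → ℝ) : Prop :=
  ∀ z ∈ A x, g z = g x

/-- A classifier `g` is robust on `x` (with true label `y`) for the attacker `A`
iff `g x = y` and `g` is stable on `x` for `A`. -/
def Robust {d : ℕ} (g : (Fin d → ℝ) → Bool) (A : (Fin d → ℝ) → Set (Fin d → ℝ))
    (x : Fin d → ℝ) (y : Bool) : Prop :=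
  g x = y ∧ Stable g A x

/-- The prediction of a tree ensemble `T` (a finite set of decision trees, with an odd
number of trees) on `x`, by majority voting over the individual tree predictions. -/
noncomputable def ensPred {d : ℕ} (T : Finset (DTree d)) (x : Fin d → ℝ) : Bool :=
  decide (T.card < 2 * (T.filter fun t => t.pred x = true).card)

/-- The combination operator `⊕` on nonnegative reals indexed by a finite set `S`:
`∑` for `L0`, `(∑ Δ_t^p)^(1/p)` for `Lp` with integer `p ≥ 1`, and `max` for `L∞`. -/
noncomputable def combine {X : Type*} (p : PNorm) (S : Finset X) (Δ : X → ℝ) : ℝ :=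
  match p with
  | .L0 => ∑ t ∈ S, Δ t
  | .Lp n => (∑ t ∈ S, Δ t ^ (n : ℕ)) ^ (((n : ℕ) : ℝ)⁻¹)
  | .Linf => S.fold max 0 Δ

section AuxLemmas

variable {d : ℕ}

lemma pnorm_nonneg (p : PNorm) (δ : Fin d → ℝ) : 0 ≤ pnorm p δ := by
  cases p with
  | L0 => exact Nat.cast_nonneg _
  | Lp n =>
      exact Real.rpow_nonneg
        (Finset.sum_nonneg fun i _ => pow_nonneg (abs_nonneg _) _) _
  | Linf => exact Real.iSup_nonneg fun i => abs_nonneg _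

lemma abs_le_pnorm_Lp (n : ℕ+) (δ : Fin d → ℝ) (i : Fin d) :
    |δ i| ≤ pnorm (.Lp n) δ := by
  have h0 : (0:ℝ) ≤ |δ i| := abs_nonneg _
  have hn : ((n:ℕ):ℝ) ≠ 0 := by
    exact_mod_cast n.pos.ne'
  show |δ i| ≤ (∑ j, |δ j| ^ (n : ℕ)) ^ (((n : ℕ) : ℝ)⁻¹)
  calc |δ i| = (|δ i| ^ (n:ℕ)) ^ (((n:ℕ):ℝ)⁻¹) := by
        rw [← Real.rpow_natCast |δ i| (n:ℕ), ← Real.rpow_mul h0,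
          mul_inv_cancel₀ hn, Real.rpow_one]
    _ ≤ (∑ j, |δ j| ^ (n:ℕ)) ^ (((n:ℕ):ℝ)⁻¹) := by
        apply Real.rpow_le_rpow (pow_nonneg h0 _) _ (by positivity)
        exact Finset.single_le_sum (f := fun j => |δ j| ^ (n:ℕ))
          (fun j _ => pow_nonneg (abs_nonneg _) _) (Finset.mem_univ i)

lemma abs_le_pnorm_Linf (δ : Fin d → ℝ) (i : Fin d) :
    |δ i| ≤ pnorm .Linf δ := by
  show |δ i| ≤ ⨆ j, |δ j|
  exact le_ciSup (f := fun j => |δ j|) (Set.Finite.bddAbove (Set.finite_range _)) i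

lemma pnorm_le_pnorm (p : PNorm) (δ' δ : Fin d → ℝ)
    (h : ∀ i, δ' i = δ i ∨ δ' i = 0) : pnorm p δ' ≤ pnorm p δ := by
  have habs : ∀ i, |δ' i| ≤ |δ i| := fun i => by
    rcases h i with h' | h' <;> simp [h', abs_nonneg]
  cases p with
  | L0 =>
      show ((Finset.univ.filter fun i => δ' i ≠ 0).card : ℝ) ≤
        ((Finset.univ.filter fun i => δ i ≠ 0).card : ℝ)
      have hsub : (Finset.univ.filter fun i => δ' i ≠ 0) ⊆
          (Finset.univ.filter fun i => δ i ≠ 0) := by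
        intro i hi
        simp only [Finset.mem_filter, Finset.mem_univ, true_and] at hi ⊢
        rcases h i with h' | h'
        · rwa [← h']
        · exact absurd h' hi
      exact_mod_cast Finset.card_le_card hsub
  | Lp n =>
      apply Real.rpow_le_rpow
        (Finset.sum_nonneg fun i _ => pow_nonneg (abs_nonneg _) _)
        (Finset.sum_le_sum fun i _ => pow_le_pow_left₀ (abs_nonneg _) (habs i) _)
        (by positivity)
  | Linf =>
      rcases isEmpty_or_nonempty (Fin d) with hd | hd
      · show (⨆ i, |δ' i|) ≤ ⨆ i, |δ i|
        rw [Real.iSup_of_isEmpty, Real.iSup_of_isEmpty]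
      · exact ciSup_le fun i => (habs i).trans (abs_le_pnorm_Linf δ i)

/-- Projection of an attack `δ` onto the features where it actually crosses a
threshold of the tree `t`. -/
noncomputable def proj (x δ : Fin d → ℝ) (t : DTree d) : Fin d → ℝ :=
  fun i => if ∃ v, t.hasNode i v ∧ ¬((x i ≤ v) ↔ (x i + δ i ≤ v)) then δ i else 0

lemma proj_cases (x δ : Fin d → ℝ) (t : DTree d) (i : Fin d) :
    proj x δ t i = δ i ∨ proj x δ t i = 0 := by
  unfold proj; split
  · exact Or.inl rfl
  · exact Or.inr rfl

lemma pred_agree (s : DTree d) (x δ δ' : Fin d → ℝ)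
    (h : ∀ f v, s.hasNode f v → ((x f + δ' f ≤ v) ↔ (x f + δ f ≤ v))) :
    s.pred (x + δ') = s.pred (x + δ) := by
  induction s with
  | leaf y => rfl
  | node f v tl tr ihl ihr =>
      have hfv := h f v (Or.inl ⟨rfl, rfl⟩)
      show (if (x + δ') f ≤ v then tl.pred (x + δ') else tr.pred (x + δ')) =
        (if (x + δ) f ≤ v then tl.pred (x + δ) else tr.pred (x + δ))
      simp only [Pi.add_apply]
      by_cases hle : x f + δ f ≤ v
      · rw [if_pos (hfv.2 hle), if_pos hle]
        exact ihl fun f' v' hn => h f' v' (Or.inr (Or.inl hn))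
      · rw [if_neg (fun hc => hle (hfv.1 hc)), if_neg hle]
        exact ihr fun f' v' hn => h f' v' (Or.inr (Or.inr hn))

lemma proj_pred (t : DTree d) (x δ : Fin d → ℝ) :
    t.pred (x + proj x δ t) = t.pred (x + δ) := by
  apply pred_agree
  intro f v hn
  unfold proj
  split
  · exact Iff.rfl
  · rename_i hcond
    push_neg at hcond
    have h1 := hcond v hn
    rw [add_zero]
    constructor
    · intro h2; exact h1.1 h2
    · intro h2; exact h1.2 h2

lemma proj_disjoint (p : PNorm) (k : ℝ) (hk : 0 ≤ k) (T : Finset (DTree d))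
    (hT : LargeSpread p k T) (x δ : Fin d → ℝ) (hδ : pnorm p δ ≤ k)
    (t t' : DTree d) (ht : t ∈ T) (ht' : t' ∈ T) (hne : t ≠ t') (i : Fin d) :
    proj x δ t i = 0 ∨ proj x δ t' i = 0 := by
  by_contra hc
  push_neg at hc
  obtain ⟨h1, h2⟩ := hc
  have e1 : ∃ v, t.hasNode i v ∧ ¬((x i ≤ v) ↔ (x i + δ i ≤ v)) := by
    by_contra h; exact h1 (by unfold proj; rw [if_neg h])
  have e2 : ∃ v, t'.hasNode i v ∧ ¬((x i ≤ v) ↔ (x i + δ i ≤ v)) := by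
    by_contra h; exact h2 (by unfold proj; rw [if_neg h])
  obtain ⟨v, hv, hsep⟩ := e1
  obtain ⟨v', hv', hsep'⟩ := e2
  have hδi : δ i ≠ 0 := fun h0 => hsep (by rw [h0, add_zero])
  have hspread := hT t ht t' ht' hne i v v' hv hv'
  have hb : ∀ w : ℝ, ¬((x i ≤ w) ↔ (x i + δ i ≤ w)) → |w - x i| ≤ |δ i| := by
    intro w hw
    rw [abs_le]
    have hd1 := le_abs_self (δ i)
    have hd2 := neg_abs_le (δ i)
    by_cases hA : x i ≤ w
    · have hB : ¬ (x i + δ i ≤ w) := fun hB => hw ⟨fun _ => hB, fun _ => hA⟩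
      push_neg at hB
      constructor <;> linarith [abs_nonneg (δ i)]
    · have hB : x i + δ i ≤ w := by
        by_contra hB
        exact hw ⟨fun h => absurd h hA, fun h => absurd h hB⟩
      push_neg at hA
      constructor <;> linarith [abs_nonneg (δ i)]
  have h1' := hb v hsep
  have h2' := hb v' hsep'
  have hvv' : |v - v'| ≤ 2 * |δ i| := by
    calc |v - v'| ≤ |v - x i| + |x i - v'| := abs_sub_le v (x i) v'
      _ = |v - x i| + |v' - x i| := by rw [abs_sub_comm (x i) v']
      _ ≤ 2 * |δ i| := by linarith
  cases p with
  | L0 =>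
      have hcard : (1:ℝ) ≤ pnorm .L0 δ := by
        show (1:ℝ) ≤ ((Finset.univ.filter fun j => δ j ≠ 0).card : ℝ)
        have hi : i ∈ Finset.univ.filter fun j => δ j ≠ 0 := by
          simp [hδi]
        exact_mod_cast Finset.card_pos.2 ⟨i, hi⟩
      have hs1 : scalarNorm .L0 (v - v') ≤ 1 := by
        show (if v - v' = 0 then (0:ℝ) else 1) ≤ 1
        split <;> norm_num
      linarith
  | Lp n =>
      have hle := abs_le_pnorm_Lp n δ i
      have hs : scalarNorm (.Lp n) (v - v') = |v - v'| := rfl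
      rw [hs] at hspread
      linarith
  | Linf =>
      have hle := abs_le_pnorm_Linf δ i
      have hs : scalarNorm .Linf (v - v') = |v - v'| := rfl
      rw [hs] at hspread
      linarith

lemma combine_mono {X : Type*} (p : PNorm) (S : Finset X) (Δ Δ' : X → ℝ)
    (h0 : ∀ t ∈ S, 0 ≤ Δ t) (h : ∀ t ∈ S, Δ t ≤ Δ' t) :
    combine p S Δ ≤ combine p S Δ' := by
  cases p with
  | L0 => exact Finset.sum_le_sum h
  | Lp n =>
      apply Real.rpow_le_rpow
        (Finset.sum_nonneg fun t ht => pow_nonneg (h0 t ht) _)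
        (Finset.sum_le_sum fun t ht => pow_le_pow_left₀ (h0 t ht) (h t ht) _)
        (by positivity)
  | Linf =>
      show S.fold max 0 Δ ≤ S.fold max 0 Δ'
      rw [Finset.fold_max_le]
      refine ⟨(Finset.le_fold_max (0:ℝ)).2 (Or.inl le_rfl), fun t ht => ?_⟩
      exact (h t ht).trans ((Finset.le_fold_max _).2 (Or.inr ⟨t, ht, le_rfl⟩))

lemma combine_le_pnorm (p : PNorm) (δ : Fin d → ℝ) {X : Type*} (S : Finset X)
    (P : X → Fin d → ℝ)
    (hP : ∀ t ∈ S, ∀ i, P t i = δ i ∨ P t i = 0)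
    (hdisj : ∀ t ∈ S, ∀ t' ∈ S, t ≠ t' → ∀ i, P t i = 0 ∨ P t' i = 0) :
    combine p S (fun t => pnorm p (P t)) ≤ pnorm p δ := by
  cases p with
  | L0 =>
      show (∑ t ∈ S, ((Finset.univ.filter fun i => P t i ≠ 0).card : ℝ)) ≤
        ((Finset.univ.filter fun i => δ i ≠ 0).card : ℝ)
      rw [← Nat.cast_sum]
      have hdis : ∀ t ∈ S, ∀ t' ∈ S, t ≠ t' →
          Disjoint (Finset.univ.filter fun i => P t i ≠ 0)
            (Finset.univ.filter fun i => P t' i ≠ 0) := by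
        intro t ht t' ht' hne
        rw [Finset.disjoint_left]
        intro i hi hi'
        simp only [Finset.mem_filter, Finset.mem_univ, true_and] at hi hi'
        rcases hdisj t ht t' ht' hne i with h | h
        · exact hi h
        · exact hi' h
      rw [← Finset.card_biUnion hdis]
      apply Nat.cast_le.2
      apply Finset.card_le_card
      intro i hi
      simp only [Finset.mem_biUnion, Finset.mem_filter, Finset.mem_univ,
        true_and] at hi ⊢
      obtain ⟨t, ht, hne⟩ := hi
      rcases hP t ht i with h | h
      · rwa [← h]
      · exact absurd h hne
  | Lp n =>
      have hnn : ((n:ℕ):ℝ) ≠ 0 := by exact_mod_cast n.pos.ne'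
      show (∑ t ∈ S, ((∑ i, |P t i| ^ (n:ℕ)) ^ (((n:ℕ):ℝ)⁻¹)) ^ (n:ℕ))
          ^ (((n:ℕ):ℝ)⁻¹) ≤ (∑ i, |δ i| ^ (n:ℕ)) ^ (((n:ℕ):ℝ)⁻¹)
      have key : ∀ t ∈ S, ((∑ i, |P t i| ^ (n:ℕ)) ^ (((n:ℕ):ℝ)⁻¹)) ^ (n:ℕ)
          = ∑ i, |P t i| ^ (n:ℕ) := by
        intro t _
        rw [← Real.rpow_natCast ((∑ i, |P t i| ^ (n:ℕ)) ^ (((n:ℕ):ℝ)⁻¹)) (n:ℕ),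
          ← Real.rpow_mul (Finset.sum_nonneg fun i _ => pow_nonneg (abs_nonneg _) _),
          inv_mul_cancel₀ hnn, Real.rpow_one]
      rw [Finset.sum_congr rfl key]
      apply Real.rpow_le_rpow
        (Finset.sum_nonneg fun t _ =>
          Finset.sum_nonneg fun i _ => pow_nonneg (abs_nonneg _) _)
        ?_ (by positivity)
      rw [Finset.sum_comm]
      apply Finset.sum_le_sum
      intro i _
      by_cases hex : ∃ t0 ∈ S, P t0 i ≠ 0
      · obtain ⟨t0, ht0, hne0⟩ := hex
        rw [Finset.sum_eq_single_of_mem t0 ht0 (fun t ht hts => by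
          rcases hdisj t ht t0 ht0 hts i with h | h
          · rw [h, abs_zero, zero_pow n.pos.ne']
          · exact absurd h hne0)]
        rcases hP t0 ht0 i with h | h
        · rw [h]
        · exact absurd h hne0
      · push_neg at hex
        rw [Finset.sum_eq_zero fun t ht => by
          rw [hex t ht, abs_zero, zero_pow n.pos.ne']]
        positivity
  | Linf =>
      show S.fold max 0 (fun t => pnorm .Linf (P t)) ≤ pnorm .Linf δ
      rw [Finset.fold_max_le]
      exact ⟨pnorm_nonneg _ _, fun t ht =>
        pnorm_le_pnorm .Linf (P t) δ (hP t ht)⟩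

end AuxLemmas


/-- Let `T` be a tree ensemble with an odd number `m` of trees and `ψ_p(T) > 2k`, and
let `x` be an instance with label `y = T(x)`. For every tree `t ∈ T` that admits some
attack within budget `k` (some `δ` with `‖δ‖_p ≤ k` and `t (x + δ) ≠ y`), let `Δ t` be
the minimum `L_p` norm of such an attack. If there is NO subset `S ⊆ T` with
`|S| = (m−1)/2 + 1` such that every tree in `S` admits an attack within budget `k` and
`⊕_{t ∈ S} Δ t ≤ k`, then `T` is stable on `x` for the attacker `A_{p,k}`. -/
theorem stmt11 {d : ℕ} (p : PNorm) (k : ℝ) (hk : 0 ≤ k)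
    (T : Finset (DTree d)) (hodd : Odd T.card) (hT : LargeSpread p k T)
    (x : Fin d → ℝ) (y : Bool) (hy : ensPred T x = y)
    (Δ : DTree d → ℝ)
    (hΔ : ∀ t ∈ T, (∃ δ : Fin d → ℝ, pnorm p δ ≤ k ∧ t.pred (x + δ) ≠ y) →
      IsLeast {c : ℝ | ∃ δ : Fin d → ℝ,
        pnorm p δ ≤ k ∧ t.pred (x + δ) ≠ y ∧ c = pnorm p δ} (Δ t))
    (hno : ¬ ∃ S ⊆ T, S.card = (T.card - 1) / 2 + 1 ∧
      (∀ t ∈ S, ∃ δ : Fin d → ℝ, pnorm p δ ≤ k ∧ t.pred (x + δ) ≠ y) ∧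
      combine p S Δ ≤ k) :
    Stable (ensPred T) (attacker p k) x := by
  intro z hz
  rw [hy]
  by_contra hne
  set δ : Fin d → ℝ := z - x with hδdef
  have hδk : pnorm p δ ≤ k := hz
  have hxz : x + δ = z := by funext i; simp [hδdef]
  set B := T.filter (fun t => t.pred z ≠ y) with hB
  have hBcard : (T.card - 1) / 2 + 1 ≤ B.card := by
    have hsplit : (T.filter fun t => t.pred z = true).card +
        (T.filter fun t => ¬ t.pred z = true).card = T.card :=
      Finset.card_filter_add_card_filter_not _
    obtain ⟨j, hj⟩ := hodd
    cases y with
    | true =>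
        have hBe : B.card = (T.filter fun t => ¬ t.pred z = true).card := by
          rw [hB]
        have hne' : ¬ (T.card < 2 * (T.filter fun t => t.pred z = true).card) := by
          intro h
          exact hne (by simp only [ensPred, decide_eq_true_eq]; exact h)
        rw [hBe]
        omega
    | false =>
        have hBe : B.card = (T.filter fun t => t.pred z = true).card := by
          rw [hB]
          congr 1
          exact Finset.filter_congr fun t _ => by simp
        have hne' : T.card < 2 * (T.filter fun t => t.pred z = true).card := by
          by_contra h
          exact hne (by simp only [ensPred, decide_eq_false_iff_not]; exact h)
        omega
  obtain ⟨S, hST, hScard⟩ := Finset.exists_subset_card_eq hBcard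
  have hSsubT : S ⊆ T := fun t ht => (Finset.mem_filter.1 (hST ht)).1
  have hattack : ∀ t ∈ S, t.pred (x + δ) ≠ y := by
    intro t ht
    have h := (Finset.mem_filter.1 (hST ht)).2
    rwa [← hxz] at h
  apply hno
  refine ⟨S, hSsubT, hScard, fun t ht => ⟨δ, hδk, hattack t ht⟩, ?_⟩
  have hPk : ∀ t ∈ S, pnorm p (proj x δ t) ≤ k := fun t ht =>
    (pnorm_le_pnorm p _ δ (proj_cases x δ t)).trans hδk
  have hΔle : ∀ t ∈ S, Δ t ≤ pnorm p (proj x δ t) := by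
    intro t ht
    have hL := hΔ t (hSsubT ht) ⟨δ, hδk, hattack t ht⟩
    exact hL.2 ⟨proj x δ t, hPk t ht,
      by rw [proj_pred]; exact hattack t ht, rfl⟩
  have hΔ0 : ∀ t ∈ S, 0 ≤ Δ t := by
    intro t ht
    obtain ⟨δ'', _, _, hh⟩ := (hΔ t (hSsubT ht) ⟨δ, hδk, hattack t ht⟩).1
    rw [hh]
    exact pnorm_nonneg p δ''
  calc combine p S Δ ≤ combine p S (fun t => pnorm p (proj x δ t)) :=
        combine_mono p S _ _ hΔ0 hΔle
    _ ≤ pnorm p δ := combine_le_pnorm p δ S _ (fun t _ => proj_cases x δ t)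
        (fun t ht t' ht' hne' i =>
          proj_disjoint p k hk T hT x δ hδk t t' (hSsubT ht) (hSsubT ht') hne' i)
    _ ≤ k := hδk
end
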